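/- Under the stationary setup, assume $\Gamma := \sum_{k\in\mathbb{Z}}|\gamma(k)| < \infty$ and $S := \sum_{(a,b,c)\in\mathbb{Z}^3}|\mathrm{cum}_4(a,b,c)| < \infty$. Then there exists a constant $C$, depending only on $\Gamma$ and $S$, such that for all real sequences $(g_k)_{k\ge 1}$ with $\sum_{k=1}^{\infty} g_k^2 < \infty$ and all integers $1 \le B \le K$ and $m \ge 1$, the random variable $S_{m} := \sum_{k=B}^{K} g_k \sum_{t=1}^{m} X_t X_{t-k}$ satisfies $\mathrm{Var}(S_m) = \mathbb{E}\big[(S_m - \mathbb{E} S_m)^2\big] \;\le\; C\, m \sum_{k=B}^{\infty} g_k^2.$ -/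

import Mathlib

/-!
Write `Sₘ = ∑_{(k,t)} g_k X_t X_{t-k}` over `(k, t) ∈ [B, K] × [1, m]`. Its variance is the
quadratic form `∑ g_k g_l Cov(X_t X_{t-k}, X_s X_{s-l})`. By stationarity and the
moment–cumulant formula, with `d = s - t` each covariance equals
`κ₄(k, d+k, d+k-l) + γ(d+k) γ(l-d) + γ(d+k-l) γ(-d)` (the product of the means cancels the
pairing `γ(k) γ(l)`). For fixed `(k, t)` these three terms are values of `|κ₄|` and of
`|γ| ⊗ |γ|` at pairwise distinct arguments, so every absolute row sum of the covariance matrix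
is at most `S + 2Γ²`, and the Schur test bounds the variance by
`(S + 2Γ²) ∑_{(k,t)} g_k² = (S + 2Γ²) m ∑_{k=B}^{K} g_k²`.
-/

open MeasureTheory Finset ProbabilityTheory
open scoped ENNReal

theorem Finset.sum_comp_le_tsum_of_injective {α β : Type*} {f : β → ℝ} (hf : Summable f)
    (hf0 : ∀ b, 0 ≤ f b) {e : α → β} (he : e.Injective) (s : Finset α) :
    ∑ a ∈ s, f (e a) ≤ ∑' b, f b := by
  simpa using hf.sum_le_tsum (s.map ⟨e, he⟩) fun b _ => hf0 b

theorem Finset.sum_sum_mul_mul_le_of_schur {ι : Type*} (s : Finset ι) (a : ι → ℝ)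
    (K : ι → ι → ℝ) {R : ℝ} (hrow : ∀ i ∈ s, ∑ j ∈ s, |K i j| ≤ R)
    (hcol : ∀ j ∈ s, ∑ i ∈ s, |K i j| ≤ R) :
    ∑ i ∈ s, ∑ j ∈ s, a i * a j * K i j ≤ R * ∑ i ∈ s, a i ^ 2 := by
  have hamgm : ∀ i j, a i * a j * K i j ≤ (a i ^ 2 * |K i j| + a j ^ 2 * |K i j|) / 2 := by
    intro i j
    have h := two_mul_le_add_sq |a i| |a j|
    rw [sq_abs, sq_abs] at h
    calc a i * a j * K i j ≤ |a i| * |a j| * |K i j| := by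
          rw [← abs_mul, ← abs_mul]; exact le_abs_self _
      _ ≤ (a i ^ 2 + a j ^ 2) / 2 * |K i j| := by gcongr; linarith
      _ = _ := by ring
  calc ∑ i ∈ s, ∑ j ∈ s, a i * a j * K i j
      ≤ ∑ i ∈ s, ∑ j ∈ s, (a i ^ 2 * |K i j| + a j ^ 2 * |K i j|) / 2 :=
        sum_le_sum fun i _ => sum_le_sum fun j _ => hamgm i j
    _ = (∑ i ∈ s, a i ^ 2 * ∑ j ∈ s, |K i j| + ∑ j ∈ s, a j ^ 2 * ∑ i ∈ s, |K i j|) / 2 := by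
        simp only [← sum_div, sum_add_distrib, mul_sum]
        rw [sum_comm (f := fun i j => a j ^ 2 * |K i j|)]
    _ ≤ (∑ i ∈ s, a i ^ 2 * R + ∑ j ∈ s, a j ^ 2 * R) / 2 := by
        gcongr with i hi j hj
        exacts [hrow i hi, hcol j hj]
    _ = R * ∑ i ∈ s, a i ^ 2 := by rw [← sum_mul]; ring

theorem ProbabilityTheory.variance_fun_sum_le_of_sum_abs_covariance_le {Ω ι : Type*}
    [MeasurableSpace Ω] {μ : Measure Ω} [IsFiniteMeasure μ] {Y : ι → Ω → ℝ} {s : Finset ι}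
    (hY : ∀ i ∈ s, MemLp (Y i) 2 μ) (a : ι → ℝ) {R : ℝ}
    (hrow : ∀ i ∈ s, ∑ j ∈ s, |cov[Y i, Y j; μ]| ≤ R) :
    Var[fun ω => ∑ i ∈ s, a i * Y i ω; μ] ≤ R * ∑ i ∈ s, a i ^ 2 := by
  rw [variance_fun_sum' fun i hi => (hY i hi).const_mul (a i)]
  simp only [covariance_const_mul_left]
  simp only [covariance_const_mul_right, ← mul_assoc]
  refine s.sum_sum_mul_mul_le_of_schur a _ hrow fun j hj => ?_
  simpa only [covariance_comm] using hrow j hj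

theorem Finset.sum_Icc_le_tsum_add {f : ℕ → ℝ} (hf : Summable f) (hf0 : ∀ k, 0 ≤ f k)
    (B K : ℕ) : ∑ k ∈ Icc B K, f k ≤ ∑' k, f (B + k) := by
  rw [← Ico_add_one_right_eq_Icc, sum_Ico_eq_sum_range]
  exact (hf.comp_injective (add_right_injective B)).sum_le_tsum _ fun k _ => hf0 _

def lagProductCov (γ : ℤ → ℝ) (cum4 : ℤ → ℤ → ℤ → ℝ) (p q : ℤ × ℤ) : ℝ :=
  cum4 p.1 (q.2 - p.2 + p.1) (q.2 - p.2 + p.1 - q.1) + γ (q.2 - p.2 + p.1) * γ (q.1 - q.2 + p.2)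
    + γ (q.2 - p.2 + p.1 - q.1) * γ (p.2 - q.2)

theorem sum_abs_lagProductCov_le {γ : ℤ → ℝ} {cum4 : ℤ → ℤ → ℤ → ℝ}
    (hγ : Summable fun k => |γ k|) (hcum4 : Summable fun r : ℤ × ℤ × ℤ => |cum4 r.1 r.2.1 r.2.2|)
    (p : ℤ × ℤ) (Q : Finset (ℤ × ℤ)) :
    ∑ q ∈ Q, |lagProductCov γ cum4 p q|
      ≤ ∑' r : ℤ × ℤ × ℤ, |cum4 r.1 r.2.1 r.2.2| + 2 * (∑' k, |γ k|) ^ 2 := by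
  set ψ : ℤ × ℤ → ℝ := fun r => |γ r.1| * |γ r.2|
  have hψ : Summable ψ := hγ.mul_of_nonneg hγ (fun _ => abs_nonneg _) fun _ => abs_nonneg _
  have hψ0 : ∀ r, 0 ≤ ψ r := fun r => mul_nonneg (abs_nonneg _) (abs_nonneg _)
  have hψsum : ∑' r, ψ r = (∑' k, |γ k|) ^ 2 := by rw [sq, hγ.tsum_mul_tsum hγ hψ]
  calc ∑ q ∈ Q, |lagProductCov γ cum4 p q|
      ≤ ∑ q ∈ Q, (|cum4 p.1 (q.2 - p.2 + p.1) (q.2 - p.2 + p.1 - q.1)|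
          + ψ (q.2 - p.2 + p.1, q.1 - q.2 + p.2) + ψ (q.2 - p.2 + p.1 - q.1, p.2 - q.2)) :=
        sum_le_sum fun q _ => (abs_add_three _ _ _).trans_eq (by simp only [ψ, abs_mul])
    _ = ∑ q ∈ Q, |cum4 p.1 (q.2 - p.2 + p.1) (q.2 - p.2 + p.1 - q.1)|
          + ∑ q ∈ Q, ψ (q.2 - p.2 + p.1, q.1 - q.2 + p.2)
          + ∑ q ∈ Q, ψ (q.2 - p.2 + p.1 - q.1, p.2 - q.2) := by
        rw [sum_add_distrib, sum_add_distrib]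
    _ ≤ ∑' r : ℤ × ℤ × ℤ, |cum4 r.1 r.2.1 r.2.2| + ∑' r, ψ r + ∑' r, ψ r := by
        gcongr
        · exact sum_comp_le_tsum_of_injective hcum4 (fun _ => abs_nonneg _)
            (e := fun q : ℤ × ℤ => (p.1, q.2 - p.2 + p.1, q.2 - p.2 + p.1 - q.1))
            (fun q q' h => by simp only [Prod.mk.injEq] at h; ext <;> omega) Q
        · exact sum_comp_le_tsum_of_injective hψ hψ0
            (e := fun q : ℤ × ℤ => (q.2 - p.2 + p.1, q.1 - q.2 + p.2))
            (fun q q' h => by simp only [Prod.mk.injEq] at h; ext <;> omega) Q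
        · exact sum_comp_le_tsum_of_injective hψ hψ0
            (e := fun q : ℤ × ℤ => (q.2 - p.2 + p.1 - q.1, p.2 - q.2))
            (fun q q' h => by simp only [Prod.mk.injEq] at h; ext <;> omega) Q
    _ = _ := by rw [hψsum]; ring

theorem MeasureTheory.MeasurePreserving.integral_comp_of_aestronglyMeasurable {Ω : Type*}
    [MeasurableSpace Ω] {μ : Measure Ω} {f : Ω → Ω} (hf : MeasurePreserving f μ μ)
    {F : Ω → ℝ} (hF : AEStronglyMeasurable F μ) : ∫ ω, F (f ω) ∂μ = ∫ ω, F ω ∂μ := by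
  rw [← integral_map hf.aemeasurable (by rwa [hf.map_eq]), hf.map_eq]

section StationaryProcess

variable {Ω : Type*} [MeasurableSpace Ω] {μ : Measure Ω} {T : ℤ → Ω → Ω} {X : ℤ → Ω → ℝ}
  {γ : ℤ → ℝ} {cum4 : ℤ → ℤ → ℤ → ℝ}

theorem integral_mul_eq_autocov (hT : ∀ t, MeasurePreserving (T t) μ μ)
    (hshift : ∀ a t ω, X a (T t ω) = X (a + t) ω) (hX : ∀ a, AEStronglyMeasurable (X a) μ)
    (hγ : ∀ k, γ k = ∫ ω, X 0 ω * X k ω ∂μ) (a b : ℤ) :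
    ∫ ω, X a ω * X b ω ∂μ = γ (b - a) := by
  rw [hγ, ← (hT a).integral_comp_of_aestronglyMeasurable (F := fun ω => X 0 ω * X (b - a) ω)
    ((hX 0).mul (hX (b - a)))]
  simp only [hshift, zero_add, sub_add_cancel]

theorem integral_mul_mul_mul_eq_cum4 (hT : ∀ t, MeasurePreserving (T t) μ μ)
    (hshift : ∀ a t ω, X a (T t ω) = X (a + t) ω) (hX : ∀ a, AEStronglyMeasurable (X a) μ)
    (hcum4 : ∀ a b c, cum4 a b c = (∫ ω, X 0 ω * X a ω * X b ω * X c ω ∂μ)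
        - γ a * γ (b - c) - γ b * γ (a - c) - γ c * γ (a - b)) (a b c d : ℤ) :
    ∫ ω, X a ω * X b ω * X c ω * X d ω ∂μ = cum4 (b - a) (c - a) (d - a)
      + γ (b - a) * γ (c - d) + γ (c - a) * γ (b - d) + γ (d - a) * γ (b - c) := by
  have hmoment : ∫ ω, X a ω * X b ω * X c ω * X d ω ∂μ
      = ∫ ω, X 0 ω * X (b - a) ω * X (c - a) ω * X (d - a) ω ∂μ := by
    rw [← (hT a).integral_comp_of_aestronglyMeasurable
      (F := fun ω => X 0 ω * X (b - a) ω * X (c - a) ω * X (d - a) ω)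
      ((((hX 0).mul (hX (b - a))).mul (hX (c - a))).mul (hX (d - a)))]
    simp only [hshift, zero_add, sub_add_cancel]
  rw [hmoment, hcum4]
  simp only [sub_sub_sub_cancel_right]
  ring

theorem memLp_two_mul_of_memLp_four {f g : Ω → ℝ} (hf : MemLp f 4 μ) (hg : MemLp g 4 μ) :
    MemLp (fun ω => f ω * g ω) 2 μ := by
  have : ENNReal.HolderTriple 4 4 2 := ⟨by
    rw [← two_mul, show (4 : ℝ≥0∞) = 2 * 2 by norm_num, ENNReal.mul_inv (by simp) (by simp),
      ← mul_assoc, ENNReal.mul_inv_cancel (by simp) (by simp), one_mul]⟩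
  exact hg.mul' hf

theorem covariance_lagProduct [IsProbabilityMeasure μ] (hT : ∀ t, MeasurePreserving (T t) μ μ)
    (hshift : ∀ a t ω, X a (T t ω) = X (a + t) ω) (hX : ∀ a, MemLp (X a) 4 μ)
    (hγ : ∀ k, γ k = ∫ ω, X 0 ω * X k ω ∂μ)
    (hcum4 : ∀ a b c, cum4 a b c = (∫ ω, X 0 ω * X a ω * X b ω * X c ω ∂μ)
        - γ a * γ (b - c) - γ b * γ (a - c) - γ c * γ (a - b)) (k t l s : ℤ) :
    cov[fun ω => X t ω * X (t - k) ω, fun ω => X s ω * X (s - l) ω; μ]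
      = lagProductCov γ cum4 (k, t) (l, s) := by
  have hXm : ∀ a, AEStronglyMeasurable (X a) μ := fun a => (hX a).aestronglyMeasurable
  rw [covariance_eq_sub (memLp_two_mul_of_memLp_four (hX _) (hX _))
    (memLp_two_mul_of_memLp_four (hX _) (hX _))]
  have hmoment : μ[(fun ω => X t ω * X (t - k) ω) * fun ω => X s ω * X (s - l) ω]
      = ∫ ω, X (t - k) ω * X t ω * X s ω * X (s - l) ω ∂μ := by
    congr 1; ext ω; simp only [Pi.mul_apply]; ring
  have hmean : ∀ a j, ∫ ω, X a ω * X (a - j) ω ∂μ = γ j := fun a j => by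
    simp only [mul_comm (X a _), integral_mul_eq_autocov hT hshift hXm hγ, sub_sub_cancel]
  rw [hmoment, integral_mul_mul_mul_eq_cum4 hT hshift hXm hcum4, hmean, hmean, lagProductCov]
  ring_nf

end StationaryProcess

theorem tail_sum_variance_bound_general
    {Ω : Type*} [MeasurableSpace Ω] (μ : Measure Ω) [IsProbabilityMeasure μ]
    (T : ℤ → Ω → Ω)
    (hTadd : ∀ a b : ℤ, T (a + b) = T a ∘ T b)
    (hTmp : ∀ a : ℤ, MeasurePreserving (T a) μ μ)
    (X0 : Ω → ℝ)
    (hmom4 : MemLp X0 4 μ)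
    (X : ℤ → Ω → ℝ) (hX : ∀ t ω, X t ω = X0 (T t ω))
    (γ : ℤ → ℝ) (hγ : ∀ k, γ k = ∫ ω, X 0 ω * X k ω ∂μ)
    (cum4 : ℤ → ℤ → ℤ → ℝ)
    (hcum4 : ∀ a b c, cum4 a b c =
      (∫ ω, X 0 ω * X a ω * X b ω * X c ω ∂μ)
        - γ a * γ (b - c) - γ b * γ (a - c) - γ c * γ (a - b))
    (hγsum : Summable fun k : ℤ => |γ k|)
    (hcumsum : Summable fun p : ℤ × ℤ × ℤ => |cum4 p.1 p.2.1 p.2.2|) :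
    ∃ C : ℝ, ∀ g : ℕ → ℝ, Summable (fun k => g k ^ 2) →
      ∀ B K m : ℕ, 1 ≤ B → B ≤ K → 1 ≤ m →
      (∫ ω, ((∑ k ∈ Finset.Icc B K,
            g k * ∑ t ∈ Finset.Icc 1 m, X (t : ℤ) ω * X ((t : ℤ) - (k : ℤ)) ω)
          - ∫ ω', (∑ k ∈ Finset.Icc B K,
            g k * ∑ t ∈ Finset.Icc 1 m, X (t : ℤ) ω' * X ((t : ℤ) - (k : ℤ)) ω') ∂μ) ^ 2 ∂μ)
        ≤ C * m * ∑' k : ℕ, g (B + k) ^ 2 := by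
  have hshift : ∀ a t ω, X a (T t ω) = X (a + t) ω := fun a t ω => by
    rw [hX, hX, hTadd]; rfl
  have hX4 : ∀ a, MemLp (X a) 4 μ := fun a =>
    (funext (hX a) : X a = X0 ∘ T a) ▸ hmom4.comp_measurePreserving (hTmp a)
  set R := ∑' r : ℤ × ℤ × ℤ, |cum4 r.1 r.2.1 r.2.2| + 2 * (∑' k, |γ k|) ^ 2
  refine ⟨R, fun g hg B K m _ _ _ => ?_⟩
  set P := Icc B K ×ˢ Icc 1 m
  set Y : ℕ × ℕ → Ω → ℝ := fun p ω => X p.2 ω * X (p.2 - p.1) ω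
  have hY : ∀ p, MemLp (Y p) 2 μ := fun p => memLp_two_mul_of_memLp_four (hX4 _) (hX4 _)
  have hsum : ∀ ω, ∑ k ∈ Icc B K, g k * ∑ t ∈ Icc 1 m, X t ω * X (t - k) ω
      = ∑ p ∈ P, g p.1 * Y p ω := fun ω => by
    simp only [P, Y, sum_product, mul_sum]
  simp only [hsum]
  rw [← variance_eq_integral (memLp_finsetSum P fun p _ => (hY p).const_mul (g p.1)).aemeasurable]
  have hrow : ∀ p ∈ P, ∑ q ∈ P, |cov[Y p, Y q; μ]| ≤ R := fun p _ => by
    simp only [Y, covariance_lagProduct hTmp hshift hX4 hγ hcum4]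
    have h := sum_abs_lagProductCov_le hγsum hcumsum (p.1, p.2)
      (P.map (Function.Embedding.prodMap Nat.castEmbedding Nat.castEmbedding))
    rwa [sum_map] at h
  calc _ ≤ R * ∑ p ∈ P, g p.1 ^ 2 :=
        variance_fun_sum_le_of_sum_abs_covariance_le (fun p _ => hY p) _ hrow
    _ = R * m * ∑ k ∈ Icc B K, g k ^ 2 := by
        simp only [P, sum_product, sum_const, Nat.card_Icc, Nat.add_sub_cancel, nsmul_eq_mul,
          mul_sum, mul_assoc]
    _ ≤ R * m * ∑' k, g (B + k) ^ 2 := by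
        gcongr
        exact sum_Icc_le_tsum_add hg (fun _ => sq_nonneg _) B K

/-- bound on the term `I₁`: for a strictly stationary mean-zero sequence
`X t = X0 ∘ T t` with `Γ = ∑|γ(k)| < ∞` and `S = ∑|cum₄| < ∞`, there is a constant `C`
(depending only on `Γ` and `S`) such that for all square-summable weights `(g_k)`,
all `1 ≤ B ≤ K` and `m ≥ 1`, the variable
`Sₘ = ∑_{k=B}^{K} g_k ∑_{t=1}^{m} Xₜ X_{t−k}` satisfies
`Var(Sₘ) ≤ C m ∑_{k=B}^∞ g_k²`. -/
theorem tail_sum_variance_bound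
    {Ω : Type*} [MeasurableSpace Ω] (μ : Measure Ω) [IsProbabilityMeasure μ]
    (T : ℤ → Ω → Ω)
    (hT0 : T 0 = id)
    (hTadd : ∀ a b : ℤ, T (a + b) = T a ∘ T b)
    (hTmp : ∀ a : ℤ, MeasurePreserving (T a) μ μ)
    (X0 : Ω → ℝ) (hX0 : Measurable X0)
    (hmean : ∫ ω, X0 ω ∂μ = 0)
    (hmom4 : MemLp X0 4 μ)
    (X : ℤ → Ω → ℝ) (hX : ∀ t ω, X t ω = X0 (T t ω))
    (γ : ℤ → ℝ) (hγ : ∀ k, γ k = ∫ ω, X 0 ω * X k ω ∂μ)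
    (cum4 : ℤ → ℤ → ℤ → ℝ)
    (hcum4 : ∀ a b c, cum4 a b c =
      (∫ ω, X 0 ω * X a ω * X b ω * X c ω ∂μ)
        - γ a * γ (b - c) - γ b * γ (a - c) - γ c * γ (a - b))
    (hγsum : Summable fun k : ℤ => |γ k|)
    (hcumsum : Summable fun p : ℤ × ℤ × ℤ => |cum4 p.1 p.2.1 p.2.2|) :
    ∃ C : ℝ, ∀ g : ℕ → ℝ, Summable (fun k => g k ^ 2) →
      ∀ B K m : ℕ, 1 ≤ B → B ≤ K → 1 ≤ m →
      (∫ ω, ((∑ k ∈ Finset.Icc B K,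
            g k * ∑ t ∈ Finset.Icc 1 m, X (t : ℤ) ω * X ((t : ℤ) - (k : ℤ)) ω)
          - ∫ ω', (∑ k ∈ Finset.Icc B K,
            g k * ∑ t ∈ Finset.Icc 1 m, X (t : ℤ) ω' * X ((t : ℤ) - (k : ℤ)) ω') ∂μ) ^ 2 ∂μ)
        ≤ C * m * ∑' k : ℕ, g (B + k) ^ 2 :=
  tail_sum_variance_bound_general μ T hTadd hTmp X0 hmom4 X hX γ hγ cum4 hcum4 hγsum hcumsum
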